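/- Let θ : ℝ/ℤ → ℝ be Lipschitz with ‖θ'‖_∞ ≤ n, θ(x) = 0, and n ≥ 8. Then |σ_n θ(x)| ≤ 1/4 + ‖θ‖_∞/2. -/

import Mathlib

open Real intervalIntegral

/-- The Fejér kernel with period 1. -/
noncomputable def fejerKernel (n : ℕ) (y : ℝ) : ℝ :=
  (1 / n) * (Real.sin (n * π * y) / Real.sin (π * y)) ^ 2

/-- The `n`-th Fejér mean of a 1-periodic function `θ` at `x`:
`σ_n θ(x) = ∫_{-1/2}^{1/2} θ(x - y) F_n(y) dy`. -/
noncomputable def fejerMean (n : ℕ) (θ : ℝ → ℝ) (x : ℝ) : ℝ :=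
  ∫ y in (-(1/2) : ℝ)..(1/2), θ (x - y) * fejerKernel n y

/-!
Bound `|σ_n θ(x)|` by `∫ |θ(x - y)| F_n(y) dy` and split at `|y| = δ := 1/(2n)`. Near `0`,
`|θ(x - y)| ≤ n|y|` and `F_n ≤ n` contribute at most `n² δ² = 1/4`. Away from `0`, `|θ| ≤ ‖θ‖_∞`
and the kernel carries mass at most `1/2`: the total mass is `1`, since `n F_n(y)` is the sum of
the Dirichlet kernels `D_0, …, D_{n-1}` at `πy`, each of mass `1`; and `sin t ≥ t - t³/6` gives
`F_n(y) ≥ n - π² n³ y² / 3` for `0 < |y| ≤ δ`, whose integral over `[-δ, δ]` is `1 - π²/36 ≥ 1/2`.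
-/

open MeasureTheory (volume ae_of_all ae_restrict_mem ae_restrict_of_ae
  measure_eq_zero_iff_ae_notMem)

noncomputable def dirichletSum (k : ℕ) (x : ℝ) : ℝ :=
  1 + 2 * ∑ j ∈ Finset.range k, cos (2 * (j + 1 : ℕ) * x)

noncomputable def fejerSum (n : ℕ) (x : ℝ) : ℝ :=
  ∑ k ∈ Finset.range n, dirichletSum k x

theorem sin_mul_dirichletSum (k : ℕ) (x : ℝ) :
    sin x * dirichletSum k x = sin ((2 * k + 1) * x) := by
  induction k with
  | zero => simp [dirichletSum]
  | succ k ih =>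
    have h := two_mul_sin_mul_cos x (2 * (k + 1) * x)
    simp only [dirichletSum, Finset.sum_range_succ] at ih ⊢
    push_cast at ih h ⊢
    rw [show x - 2 * (k + 1) * x = -((2 * k + 1) * x) by ring, sin_neg,
      show x + 2 * (k + 1) * x = (2 * (k + 1) + 1) * x by ring] at h
    linear_combination ih + h

theorem sin_sq_mul_fejerSum (n : ℕ) (x : ℝ) : sin x ^ 2 * fejerSum n x = sin (n * x) ^ 2 := by
  induction n with
  | zero => simp [fejerSum]
  | succ n ih =>
    have h := two_mul_sin_mul_sin x ((2 * n + 1) * x)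
    rw [show x - (2 * n + 1) * x = -(2 * (n * x)) by ring, cos_neg,
      show x + (2 * n + 1) * x = 2 * ((n + 1 : ℕ) * x) by push_cast; ring] at h
    rw [fejerSum, Finset.sum_range_succ, ← fejerSum, mul_add, ih, sq (sin x), mul_assoc,
      sin_mul_dirichletSum, sin_sq_eq_half_sub, sin_sq_eq_half_sub]
    linear_combination h / 2

@[fun_prop]
theorem continuous_dirichletSum (k : ℕ) : Continuous (dirichletSum k) := by
  unfold dirichletSum; fun_prop

@[fun_prop]
theorem continuous_fejerSum (n : ℕ) : Continuous (fejerSum n) := by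
  unfold fejerSum; fun_prop

theorem integral_cos_two_mul_nat_mul_pi {m : ℕ} (hm : m ≠ 0) :
    ∫ y in (-(1/2) : ℝ)..(1/2), cos (2 * m * (π * y)) = 0 := by
  have hc : (2 * m * π : ℝ) ≠ 0 := by positivity
  simp_rw [← mul_assoc]
  rw [integral_comp_mul_left _ hc, integral_cos,
    show 2 * m * π * (1 / 2) = (m : ℤ) * π by push_cast; ring,
    show 2 * m * π * -(1 / 2) = (-m : ℤ) * π by push_cast; ring,
    sin_int_mul_pi, sin_int_mul_pi, sub_self, smul_zero]

theorem integral_dirichletSum (k : ℕ) :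
    ∫ y in (-(1/2) : ℝ)..(1/2), dirichletSum k (π * y) = 1 := by
  unfold dirichletSum
  rw [integral_add intervalIntegrable_const (Continuous.intervalIntegrable (by fun_prop) _ _),
    integral_const_mul,
    integral_finsetSum fun j _ => Continuous.intervalIntegrable (by fun_prop) _ _,
    Finset.sum_eq_zero fun j _ => integral_cos_two_mul_nat_mul_pi j.succ_ne_zero]
  norm_num

theorem integral_fejerSum (n : ℕ) :
    ∫ y in (-(1/2) : ℝ)..(1/2), fejerSum n (π * y) = n := by
  unfold fejerSum
  rw [integral_finsetSum fun k _ => Continuous.intervalIntegrable (by fun_prop) _ _,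
    Finset.sum_congr rfl fun k _ => integral_dirichletSum k]
  simp

theorem fejerKernel_eq_fejerSum {n : ℕ} {y : ℝ} (hy : sin (π * y) ≠ 0) :
    fejerKernel n y = fejerSum n (π * y) / n := by
  rw [fejerKernel, div_pow, mul_assoc, ← sin_sq_mul_fejerSum n (π * y)]
  field_simp

-- At the integers `fejerKernel` is the junk value `0` of `0 / 0`, hence only almost everywhere.
theorem fejerKernel_ae_eq (n : ℕ) :
    fejerKernel n =ᵐ[volume] fun y => fejerSum n (π * y) / n := by
  have hnull : volume (Set.range ((↑) : ℤ → ℝ)) = 0 :=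
    (Set.countable_range _).measure_zero _
  filter_upwards [measure_eq_zero_iff_ae_notMem.mp hnull] with y hy
  refine fejerKernel_eq_fejerSum fun h => hy ?_
  obtain ⟨k, hk⟩ := sin_eq_zero_iff.mp h
  exact ⟨k, mul_left_cancel₀ pi_ne_zero (by linarith)⟩

theorem intervalIntegrable_fejerKernel (n : ℕ) (a b : ℝ) :
    IntervalIntegrable (fejerKernel n) volume a b :=
  (Continuous.intervalIntegrable (by fun_prop) a b).congr_ae
    (ae_restrict_of_ae (fejerKernel_ae_eq n).symm)

theorem integral_fejerKernel {n : ℕ} (hn : n ≠ 0) :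
    ∫ y in (-(1/2) : ℝ)..(1/2), fejerKernel n y = 1 := by
  rw [integral_congr_ae ((fejerKernel_ae_eq n).mono fun y h _ => h), integral_div,
    integral_fejerSum]
  field_simp

theorem fejerKernel_nonneg (n : ℕ) (y : ℝ) : 0 ≤ fejerKernel n y := by
  unfold fejerKernel; positivity

theorem fejerKernel_abs (n : ℕ) (y : ℝ) : fejerKernel n |y| = fejerKernel n y := by
  refine abs_by_cases (fun z => fejerKernel n z = fejerKernel n y) rfl ?_
  simp only [fejerKernel, mul_neg, sin_neg, neg_div_neg_eq]

theorem abs_sin_nat_mul_le (n : ℕ) (x : ℝ) : |sin (n * x)| ≤ n * |sin x| := by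
  induction n with
  | zero => simp
  | succ m ih =>
    rw [Nat.cast_succ, add_mul, one_mul, sin_add]
    calc |sin (m * x) * cos x + cos (m * x) * sin x|
        ≤ |sin (m * x)| * |cos x| + |cos (m * x)| * |sin x| := by
          rw [← abs_mul, ← abs_mul]; exact abs_add_le _ _
      _ ≤ |sin (m * x)| * 1 + 1 * |sin x| := by gcongr <;> exact abs_cos_le_one _
      _ ≤ (m + 1) * |sin x| := by linarith

theorem fejerKernel_le (n : ℕ) (y : ℝ) : fejerKernel n y ≤ n := by
  have hratio : (sin (n * π * y) / sin (π * y)) ^ 2 ≤ (n : ℝ) ^ 2 := by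
    rcases eq_or_ne (sin (π * y)) 0 with h | h
    · simp [h]
    rw [div_pow, div_le_iff₀ (by positivity), mul_assoc, ← sq_abs, ← sq_abs (sin (π * y)),
      ← mul_pow]
    gcongr
    exact abs_sin_nat_mul_le n (π * y)
  calc fejerKernel n y ≤ 1 / n * (n : ℝ) ^ 2 := by unfold fejerKernel; gcongr
    _ = n := by rw [one_div, ← div_eq_inv_mul, sq, mul_self_div_self]

theorem le_fejerKernel_of_pos {n : ℕ} {y : ℝ} (hy : 0 < y) (hyn : y ≤ 1 / (2 * n)) :
    n - π ^ 2 * n ^ 3 / 3 * y ^ 2 ≤ fejerKernel n y := by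
  have hn : n ≠ 0 := by rintro rfl; simp at hyn; linarith
  have hn1 : (1 : ℝ) ≤ n := by exact_mod_cast Nat.one_le_iff_ne_zero.mpr hn
  obtain ⟨t, ht⟩ : ∃ t, t = n * π * y := ⟨_, rfl⟩
  have ht0 : 0 < t := by rw [ht]; positivity
  have htπ : t ≤ π / 2 := by
    calc t ≤ n * π * (1 / (2 * n)) := by rw [ht]; gcongr
      _ = π / 2 := by field_simp
  have ht2 : t ^ 2 ≤ 6 := by nlinarith [pi_le_four]
  have hcube : 0 ≤ t - t ^ 3 / 6 := by nlinarith [mul_le_mul_of_nonneg_left ht2 ht0.le]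
  have hsin_pos : 0 < sin (π * y) := by
    apply sin_pos_of_pos_of_lt_pi (by positivity)
    nlinarith [pi_pos]
  calc n - π ^ 2 * n ^ 3 / 3 * y ^ 2 ≤ n * (1 - t ^ 2 / 6) ^ 2 := by
        have hexpand :
            n * (1 - t ^ 2 / 6) ^ 2 = n - π ^ 2 * n ^ 3 / 3 * y ^ 2 + n * t ^ 4 / 36 := by
          rw [ht]; ring
        rw [hexpand]
        linarith [show 0 ≤ n * t ^ 4 / 36 by positivity]
    _ = (t - t ^ 3 / 6) ^ 2 / (n * (π * y) ^ 2) := by rw [ht]; field_simp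
    _ ≤ sin t ^ 2 / (n * sin (π * y) ^ 2) := by
        gcongr
        · exact sin_ge_sub_cube ht0.le
        · exact sin_le (by positivity)
    _ = fejerKernel n y := by rw [fejerKernel, div_pow, ht]; field_simp

theorem le_fejerKernel {n : ℕ} {y : ℝ} (hy : y ≠ 0) (hyn : |y| ≤ 1 / (2 * n)) :
    n - π ^ 2 * n ^ 3 / 3 * y ^ 2 ≤ fejerKernel n y := by
  simpa only [sq_abs, fejerKernel_abs] using le_fejerKernel_of_pos (abs_pos.mpr hy) hyn

theorem one_half_le_integral_fejerKernel {n : ℕ} (hn : n ≠ 0) :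
    1 / 2 ≤ ∫ y in (-(1 / (2 * n)) : ℝ)..(1 / (2 * n)), fejerKernel n y := by
  set δ : ℝ := 1 / (2 * n) with hδ
  have hn' : (n : ℝ) ≠ 0 := Nat.cast_ne_zero.mpr hn
  have hδ0 : 0 < δ := by positivity
  have hlower : (fun y => n - π ^ 2 * n ^ 3 / 3 * y ^ 2)
      ≤ᵐ[volume.restrict (Set.Icc (-δ) δ)] fejerKernel n := by
    filter_upwards [ae_restrict_mem measurableSet_Icc,
      ae_restrict_of_ae (measure_eq_zero_iff_ae_notMem.mp
        (Real.volume_singleton (a := 0)))] with y hyδ hy0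
    exact le_fejerKernel hy0 (abs_le.mpr hyδ)
  calc (1 / 2 : ℝ) ≤ 1 - π ^ 2 / 36 := by nlinarith [pi_le_four, pi_pos]
    _ = ∫ y in -δ..δ, (n - π ^ 2 * n ^ 3 / 3 * y ^ 2) := by
        rw [integral_sub intervalIntegrable_const (Continuous.intervalIntegrable (by fun_prop) _ _),
          integral_const, integral_const_mul, integral_pow, hδ, smul_eq_mul]
        norm_num
        field_simp
        ring
    _ ≤ ∫ y in -δ..δ, fejerKernel n y :=
        integral_mono_ae_restrict (by linarith) (Continuous.intervalIntegrable (by fun_prop) _ _)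
          (intervalIntegrable_fejerKernel n _ _) hlower

theorem integral_abs_mul_le_of_abs_le {f K : ℝ → ℝ} {a b c d M : ℝ} (hca : c ≤ a) (hab : a ≤ b)
    (hbd : b ≤ d) (hf : Continuous f) (hK0 : ∀ y, 0 ≤ K y)
    (hK : IntervalIntegrable K volume c d) (hfM : ∀ y, |f y| ≤ M) :
    ∫ y in c..d, |f y| * K y
      ≤ (∫ y in a..b, |f y| * K y) + M * ((∫ y in c..d, K y) - ∫ y in a..b, K y) := by
  have hKab : IntervalIntegrable K volume a b :=
    hK.mono_set (Set.uIcc_subset_uIcc (Set.mem_uIcc_of_le hca (hab.trans hbd))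
      (Set.mem_uIcc_of_le (hca.trans hab) hbd))
  have hfK : ∀ {u v : ℝ}, IntervalIntegrable K volume u v →
      IntervalIntegrable (fun y => |f y| * K y) volume u v :=
    fun h => h.continuousOn_mul (by fun_prop)
  -- the integrand `(M - |f|) K` is nonnegative, so its integral grows with the interval
  have hgap := integral_mono_interval hca hab hbd
    (ae_of_all _ fun y => sub_nonneg.mpr
      (mul_le_mul_of_nonneg_right (hfM y) (hK0 y)))
    ((hK.const_mul M).sub (hfK hK))
  rw [integral_sub (hKab.const_mul M) (hfK hKab), integral_sub (hK.const_mul M) (hfK hK),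
    integral_const_mul, integral_const_mul] at hgap
  linarith

theorem integral_abs_eq_sq {δ : ℝ} (hδ : 0 ≤ δ) : ∫ y in -δ..δ, |y| = δ ^ 2 := by
  rw [← integral_add_adjacent_intervals (b := 0) (continuous_abs.intervalIntegrable _ _)
      (continuous_abs.intervalIntegrable _ _),
    integral_congr (g := fun y => -y) fun y hy => abs_of_nonpos (by
      rw [Set.uIcc_of_le (by linarith)] at hy; exact hy.2),
    integral_congr (g := fun y => y) fun y hy => abs_of_nonneg (by
      rw [Set.uIcc_of_le hδ] at hy; exact hy.1),
    integral_neg, integral_id, integral_id]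
  ring

theorem integral_abs_mul_fejerKernel_le {n : ℕ} (hn : n ≠ 0) {f : ℝ → ℝ} (hf : Continuous f)
    (hfn : ∀ y, |f y| ≤ n * |y|) :
    ∫ y in (-(1 / (2 * n)) : ℝ)..(1 / (2 * n)), |f y| * fejerKernel n y ≤ 1 / 4 := by
  set δ : ℝ := 1 / (2 * n) with hδ
  have hn' : (n : ℝ) ≠ 0 := Nat.cast_ne_zero.mpr hn
  have hδ0 : 0 < δ := by positivity
  calc ∫ y in -δ..δ, |f y| * fejerKernel n y ≤ ∫ y in -δ..δ, n ^ 2 * |y| := by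
        refine integral_mono_on (by linarith)
          ((intervalIntegrable_fejerKernel n _ _).continuousOn_mul (by fun_prop))
          (Continuous.intervalIntegrable (by fun_prop) _ _) fun y _ => ?_
        calc |f y| * fejerKernel n y ≤ (n * |y|) * n :=
              mul_le_mul (hfn y) (fejerKernel_le n y) (fejerKernel_nonneg n y) (by positivity)
          _ = n ^ 2 * |y| := by ring
    _ = 1 / 4 := by
        rw [integral_const_mul, integral_abs_eq_sq hδ0.le, hδ]
        field_simp
        ring

/-- If `θ` is 1-periodic, Lipschitz with `‖θ'‖_∞ ≤ n`, `θ(x) = 0` and `n ≥ 8`, then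
`|σ_n θ(x)| ≤ 1/4 + ‖θ‖_∞ / 2`. -/
theorem abs_fejerMean_le_of_deriv_le (n : ℕ) (hn : 8 ≤ n) (θ : ℝ → ℝ)
    (hper : Function.Periodic θ 1) (hdiff : Differentiable ℝ θ)
    (hlip : ∀ t : ℝ, |deriv θ t| ≤ n) (x : ℝ) (hx : θ x = 0) :
    |fejerMean n θ x| ≤ 1/4 + (⨆ t : ℝ, |θ t|) / 2 := by
  have hn0 : n ≠ 0 := by omega
  have hθ : Continuous θ := hdiff.continuous
  set M := ⨆ t : ℝ, |θ t|
  have hM : ∀ t, |θ t| ≤ M := le_ciSup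
    ((hper.comp abs).isBounded_of_continuous one_ne_zero (by fun_prop)).bddAbove
  have hM0 : 0 ≤ M := (abs_nonneg _).trans (hM 0)
  have hnear : ∀ y, |θ (x - y)| ≤ n * |y| := fun y => by
    simpa [hx] using convex_univ.norm_image_sub_le_of_norm_deriv_le (fun t _ => hdiff t)
      (fun t _ => hlip t) (Set.mem_univ x) (Set.mem_univ (x - y))
  set δ : ℝ := 1 / (2 * n)
  have hδ0 : 0 < δ := by positivity
  have hδ : δ ≤ 1 / 2 :=
    one_div_le_one_div_of_le two_pos (by exact_mod_cast (by omega : 2 ≤ 2 * n))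
  calc |fejerMean n θ x| ≤ ∫ y in (-(1/2) : ℝ)..(1/2), |θ (x - y)| * fejerKernel n y := by
        refine (abs_integral_le_integral_abs (by norm_num)).trans_eq (integral_congr fun y _ => ?_)
        simp only [abs_mul, abs_of_nonneg (fejerKernel_nonneg n y)]
    _ ≤ (∫ y in -δ..δ, |θ (x - y)| * fejerKernel n y)
          + M * ((∫ y in (-(1/2) : ℝ)..(1/2), fejerKernel n y) - ∫ y in -δ..δ, fejerKernel n y) :=
        integral_abs_mul_le_of_abs_le (by linarith) (by linarith) hδ (by fun_prop)
          (fejerKernel_nonneg n) (intervalIntegrable_fejerKernel n _ _) fun y => hM _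
    _ ≤ 1 / 4 + M * (1 - 1 / 2) := by
        rw [integral_fejerKernel hn0]
        gcongr
        · exact integral_abs_mul_fejerKernel_le hn0 (by fun_prop) hnear
        · exact one_half_le_integral_fejerKernel hn0
    _ = 1 / 4 + M / 2 := by ring
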